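/- arXiv:0801.3472 — 3 statements merged into one kernel-verified Lean document; each statement's English description precedes it below -/
import Mathlib

section
/- Let a group G act by ring automorphisms on a ring R such that for every r ∈ R the ideal generated by the orbit G·r is a finitely generated ideal of R. Then every G-prime ideal I of R has the form I = (P:G) = ⋂_{g∈G} g·P for some prime ideal P of R. In particular, every G-prime ideal is semiprime. -/
/-- A two-sided ideal `P` of a ring `R` is prime if `P ≠ R` and `AB ⊆ P` implies
`A ⊆ P` or `B ⊆ P` for two-sided ideals `A`, `B`. -/
def IsPrimeTwoSided {R : Type*} [Ring R] (P : TwoSidedIdeal R) : Prop :=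
  P ≠ ⊤ ∧ ∀ A B : TwoSidedIdeal R, (∀ a ∈ A, ∀ b ∈ B, a * b ∈ P) → A ≤ P ∨ B ≤ P

/-- An ideal is `G`-stable if it is preserved by the action of every `g ∈ G`. -/
def IsGStable (G : Type*) {R : Type*} [Group G] [Ring R] [MulSemiringAction G R]
    (I : TwoSidedIdeal R) : Prop :=
  ∀ g : G, ∀ x ∈ I, g • x ∈ I

/-- A proper `G`-stable ideal `I` is `G`-prime if `AB ⊆ I` for `G`-stable ideals
`A`, `B` implies `A ⊆ I` or `B ⊆ I`. -/
def IsGPrime (G : Type*) {R : Type*} [Group G] [Ring R] [MulSemiringAction G R]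
    (I : TwoSidedIdeal R) : Prop :=
  I ≠ ⊤ ∧ IsGStable G I ∧
    ∀ A B : TwoSidedIdeal R, IsGStable G A → IsGStable G B →
      (∀ a ∈ A, ∀ b ∈ B, a * b ∈ I) → A ≤ I ∨ B ≤ I


section Aux

/-- The `G`-core of a two-sided ideal. -/
def coreIdeal (G : Type*) {R : Type*} [Group G] [Ring R] [MulSemiringAction G R]
    (P : TwoSidedIdeal R) : TwoSidedIdeal R :=
  TwoSidedIdeal.mk' {x : R | ∀ g : G, g • x ∈ P}
    (fun g => by simp)
    (fun hx hy g => by rw [smul_add]; exact P.add_mem (hx g) (hy g))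
    (fun hx g => by rw [smul_neg]; exact P.neg_mem (hx g))
    (fun hy g => by rw [smul_mul']; exact P.mul_mem_left _ _ (hy g))
    (fun hx g => by rw [smul_mul']; exact P.mul_mem_right _ _ (hx g))

lemma mem_coreIdeal {G R : Type*} [Group G] [Ring R] [MulSemiringAction G R]
    {P : TwoSidedIdeal R} {x : R} : x ∈ coreIdeal G P ↔ ∀ g : G, g • x ∈ P :=
  TwoSidedIdeal.mem_mk' _ _ _ _ _ _ x

/-- The union of a nonempty chain of two-sided ideals, as a two-sided ideal. -/
def chainUnion {R : Type*} [Ring R] (c : Set (TwoSidedIdeal R))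
    (hc : IsChain (· ≤ ·) c) (hne : c.Nonempty) : TwoSidedIdeal R :=
  TwoSidedIdeal.mk' (⋃ J ∈ c, (J : Set R))
    (by obtain ⟨J, hJ⟩ := hne
        exact Set.mem_biUnion hJ J.zero_mem)
    (by rintro x y hx hy
        simp only [Set.mem_iUnion] at hx hy ⊢
        obtain ⟨J, hJ, hxJ⟩ := hx
        obtain ⟨K, hK, hyK⟩ := hy
        rcases hc.total hJ hK with h | h
        · exact ⟨K, hK, K.add_mem (h hxJ) hyK⟩
        · exact ⟨J, hJ, J.add_mem hxJ (h hyK)⟩)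
    (by rintro x hx
        simp only [Set.mem_iUnion] at hx ⊢
        obtain ⟨J, hJ, hxJ⟩ := hx
        exact ⟨J, hJ, J.neg_mem hxJ⟩)
    (by rintro x y hy
        simp only [Set.mem_iUnion] at hy ⊢
        obtain ⟨J, hJ, hyJ⟩ := hy
        exact ⟨J, hJ, J.mul_mem_left _ _ hyJ⟩)
    (by rintro x y hx
        simp only [Set.mem_iUnion] at hx ⊢
        obtain ⟨J, hJ, hxJ⟩ := hx
        exact ⟨J, hJ, J.mul_mem_right _ _ hxJ⟩)

lemma mem_chainUnion {R : Type*} [Ring R] {c : Set (TwoSidedIdeal R)}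
    {hc : IsChain (· ≤ ·) c} {hne : c.Nonempty} {x : R} :
    x ∈ chainUnion c hc hne ↔ ∃ J ∈ c, x ∈ J := by
  rw [chainUnion, TwoSidedIdeal.mem_mk']
  simp

/-- A finite set inside a chain-union lies in a single member. -/
lemma finset_subset_chain_mem {R : Type*} [Ring R] {c : Set (TwoSidedIdeal R)}
    (hc : IsChain (· ≤ ·) c) (hne : c.Nonempty) (s : Finset R)
    (hs : ∀ a ∈ s, ∃ J ∈ c, a ∈ J) : ∃ J ∈ c, ∀ a ∈ s, a ∈ J := by
  classical
  induction s using Finset.induction_on with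
  | empty => obtain ⟨J, hJ⟩ := hne; exact ⟨J, hJ, by simp⟩
  | @insert a s ha ih =>
    obtain ⟨J, hJ, hJs⟩ := ih (fun b hb => hs b (Finset.mem_insert_of_mem hb))
    obtain ⟨K, hK, haK⟩ := hs a (Finset.mem_insert_self a s)
    rcases hc.total hJ hK with h | h
    · exact ⟨K, hK, fun b hb => by
        rcases Finset.mem_insert.1 hb with rfl | hb
        · exact haK
        · exact h (hJs b hb)⟩
    · exact ⟨J, hJ, fun b hb => by
        rcases Finset.mem_insert.1 hb with rfl | hb
        · exact h haK
        · exact hJs b hb⟩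

end Aux

/-- Let a group `G` act by ring automorphisms on `R` so that the two-sided ideal
generated by each `G`-orbit is finitely generated. Then every `G`-prime ideal `I` is
of the form `I = (P:G) = ⋂_{g∈G} g·P` for some prime ideal `P`; in particular `I` is
semiprime. -/
theorem GPrime_is_core_of_prime {G R : Type*} [Group G] [Ring R]
    [MulSemiringAction G R]
    (hfg : ∀ r : R, ∃ s : Finset R,
      TwoSidedIdeal.span (Set.range fun g : G => g • r) = TwoSidedIdeal.span ↑s)
    (I : TwoSidedIdeal R) (hI : IsGPrime G I) :
    (∃ P : TwoSidedIdeal R, IsPrimeTwoSided P ∧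
        ∀ x : R, x ∈ I ↔ ∀ g : G, g • x ∈ P) ∧
      ∀ J : TwoSidedIdeal R, (∀ a ∈ J, ∀ b ∈ J, a * b ∈ I) → J ≤ I := by
  obtain ⟨hItop, hIstab, hIprime⟩ := hI
  -- The collection of ideals containing `I` whose core is inside `I`.
  set S : Set (TwoSidedIdeal R) := {P | I ≤ P ∧ coreIdeal G P ≤ I} with hS
  have hIS : I ∈ S := ⟨le_rfl, fun x hx => by simpa using mem_coreIdeal.1 hx 1⟩
  -- Zorn's lemma
  obtain ⟨P, hIP, ⟨hPI, hPcore⟩, hPmax⟩ := zorn_le_nonempty₀ S (fun c hcS hc y hy => by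
    refine ⟨chainUnion c hc ⟨y, hy⟩, ⟨?_, ?_⟩, fun z hz x hx => mem_chainUnion.2 ⟨z, hz, hx⟩⟩
    · exact le_trans (hcS hy).1 (fun x hx => mem_chainUnion.2 ⟨y, hy, hx⟩)
    · intro x hx
      have hx' := mem_coreIdeal.1 hx
      obtain ⟨s, hs⟩ := hfg x
      have hsub : ∀ a ∈ s, ∃ J ∈ c, a ∈ J := by
        intro a ha
        have : a ∈ TwoSidedIdeal.span (Set.range fun g : G => g • x) := by
          rw [hs]; exact TwoSidedIdeal.subset_span ha
        have := TwoSidedIdeal.mem_span_iff.1 this (chainUnion c hc ⟨y, hy⟩)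
          (by rintro _ ⟨g, rfl⟩; exact hx' g)
        exact mem_chainUnion.1 this
      obtain ⟨J, hJc, hJ⟩ := finset_subset_chain_mem hc ⟨y, hy⟩ s hsub
      have horb : ∀ g : G, g • x ∈ J := by
        intro g
        have : (g • x : R) ∈ TwoSidedIdeal.span (↑s : Set R) := by
          rw [← hs]; exact TwoSidedIdeal.subset_span ⟨g, rfl⟩
        exact TwoSidedIdeal.mem_span_iff.1 this J (fun a ha => hJ a ha)
      exact (hcS hJc).2 (mem_coreIdeal.2 horb)) I hIS
  -- `P` is proper
  have hPtop : P ≠ ⊤ := by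
    rintro rfl
    exact hItop (eq_top_iff.2 fun x _ =>
      hPcore (mem_coreIdeal.2 fun g => TwoSidedIdeal.mem_top _))
  -- `P` is prime
  have hPprime : IsPrimeTwoSided P := by
    refine ⟨hPtop, fun A B hAB => ?_⟩
    by_contra hcon
    push_neg at hcon
    obtain ⟨hA, hB⟩ := hcon
    -- if P ⊔ A were in S, then P ⊔ A ≤ P by maximality, so A ≤ P, contradiction
    have key : ∀ C : TwoSidedIdeal R, ¬ C ≤ P → ¬ coreIdeal G (P ⊔ C) ≤ I := by
      intro C hC hcore
      have : P ⊔ C ∈ S := ⟨le_trans hPI le_sup_left, hcore⟩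
      have := hPmax this le_sup_left
      exact hC (le_trans le_sup_right this)
    have hA' := key A hA
    have hB' := key B hB
    have hstab : ∀ Q : TwoSidedIdeal R, IsGStable G (coreIdeal G Q) := by
      intro Q g x hx
      refine mem_coreIdeal.2 fun h => ?_
      rw [← mul_smul]
      exact mem_coreIdeal.1 hx (h * g)
    have hprod : ∀ a ∈ coreIdeal G (P ⊔ A), ∀ b ∈ coreIdeal G (P ⊔ B), a * b ∈ I := by
      intro a ha b hb
      refine hPcore (mem_coreIdeal.2 fun g => ?_)
      rw [smul_mul']
      obtain ⟨p, hp, a', ha', hpa⟩ := TwoSidedIdeal.mem_sup.1 (mem_coreIdeal.1 ha g)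
      obtain ⟨q, hq, b', hb', hqb⟩ := TwoSidedIdeal.mem_sup.1 (mem_coreIdeal.1 hb g)
      rw [← hpa, ← hqb, show (p + a') * (q + b') = p * (q + b') + a' * q + a' * b' by noncomm_ring]
      exact P.add_mem (P.add_mem (P.mul_mem_right _ _ hp) (P.mul_mem_left _ _ hq))
        (hAB a' ha' b' hb')
    rcases hIprime _ _ (hstab _) (hstab _) hprod with h | h
    · exact hA' h
    · exact hB' h
  -- the core of P is exactly I
  have hiff : ∀ x : R, x ∈ I ↔ ∀ g : G, g • x ∈ P := by
    intro x
    constructor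
    · intro hx g; exact hPI (hIstab g x hx)
    · intro hx; exact hPcore (mem_coreIdeal.2 hx)
  refine ⟨⟨P, hPprime, hiff⟩, ?_⟩
  -- semiprimeness
  intro J hJ x hx
  refine (hiff x).2 fun g => ?_
  -- consider the ideal g • J
  set K : TwoSidedIdeal R := TwoSidedIdeal.mk' {y : R | g⁻¹ • y ∈ J}
    (by simp)
    (fun {a b} ha hb => by rw [Set.mem_setOf_eq, smul_add]; exact J.add_mem ha hb)
    (fun {a} ha => by rw [Set.mem_setOf_eq, smul_neg]; exact J.neg_mem ha)
    (fun {a b} hb => by rw [Set.mem_setOf_eq, smul_mul']; exact J.mul_mem_left _ _ hb)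
    (fun {a b} ha => by rw [Set.mem_setOf_eq, smul_mul']; exact J.mul_mem_right _ _ ha)
    with hK
  have hKmem : ∀ y : R, y ∈ K ↔ g⁻¹ • y ∈ J := fun y => TwoSidedIdeal.mem_mk' _ _ _ _ _ _ y
  have hKP : K ≤ P := by
    have hab : ∀ a ∈ K, ∀ b ∈ K, a * b ∈ P := by
      intro a ha b hb
      have hIab : a * b ∈ I := by
        have h1 : g⁻¹ • (a * b) ∈ I := by
          rw [smul_mul']
          exact hJ _ ((hKmem a).1 ha) _ ((hKmem b).1 hb)
        have := hIstab g _ h1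
        rwa [smul_inv_smul] at this
      simpa using (hiff _).1 hIab 1
    rcases hPprime.2 K K hab with h | h <;> exact h
  have : g • x ∈ K := (hKmem _).2 (by rwa [inv_smul_smul])
  exact hKP this
end

section
/- Let a group G act by k-algebra automorphisms on a k-algebra R and let P be a prime ideal of R with finite G-orbit. Then the canonical surjection R/(P:G) → R/P induces an isomorphism of fields C(R/(P:G))^G ≅ C(R/P)^{G_P}, where G_P is the stabilizer of P in G. -/
/-!
The isomorphism sends `c` to the unique `d` such that multiplication by `d` sends the image of
`x` in `R/P` to that of `y` whenever multiplication by `c` does so in `R/(P:G)`; additivity,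
multiplicativity and injectivity follow from uniqueness on dense ideals.

Everything rests on the ideal `N = ⋂_{g ∉ G_P} g⁻¹P`. Members of a finite orbit are pairwise
incomparable, so by primality `N ⊄ P`, while `N ∩ P ⊆ (P:G)`. Multiplying by `N` thus carries
dense ideals and well-definedness from `R/(P:G)` to `R/P`, and `c` pushes forward to `d`.
Conversely `d` pulls back along the `G`-stable relation "`d (g u) = g v` for all `g`": it holds
for the pairs from `N` related by `d`, because off `G_P` both sides lie in `P`, so its domain
contains the translates of a dense set.
-/

open Pointwise

/-- `(Q, ι)` is a right Amitsur–Martindale ring of quotients of `R`. -/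
structure IsMartindaleQuot {R Q : Type*} [Ring R] [Ring Q] (ι : R →+* Q) : Prop where
  inj : Function.Injective ι
  dom : ∀ q : Q, ∃ I : TwoSidedIdeal R,
    (∀ r : R, (∀ x ∈ I, r * x = 0) → r = 0) ∧ ∀ x ∈ I, ∃ r : R, q * ι x = ι r
  ann : ∀ (q : Q) (I : TwoSidedIdeal R), (∀ r : R, (∀ x ∈ I, r * x = 0) → r = 0) →
    (∀ x ∈ I, q * ι x = 0) → q = 0
  lift : ∀ (I : TwoSidedIdeal R) (f : R → R),
    (∀ r : R, (∀ x ∈ I, r * x = 0) → r = 0) →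
    (∀ x ∈ I, ∀ y ∈ I, f (x + y) = f x + f y) →
    (∀ x ∈ I, ∀ r : R, f (x * r) = f x * r) →
    ∃ q : Q, ∀ x ∈ I, q * ι x = ι (f x)

/-- The subring of `G`-invariant central elements of `Q`; when `Q` is the
Amitsur–Martindale quotient ring of a ring, this is the invariant subring of the
extended centroid. -/
def invCenter (G Q : Type*) [Group G] [Ring Q] [MulSemiringAction G Q] :
    Subring Q where
  carrier := {q : Q | q ∈ Subring.center Q ∧ ∀ g : G, g • q = q}
  one_mem' := ⟨Subring.one_mem _, fun g => smul_one g⟩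
  mul_mem' := fun ha hb =>
    ⟨mul_mem ha.1 hb.1, fun g => by rw [smul_mul', ha.2, hb.2]⟩
  zero_mem' := ⟨Subring.zero_mem _, fun g => smul_zero g⟩
  add_mem' := fun ha hb =>
    ⟨add_mem ha.1 hb.1, fun g => by rw [smul_add, ha.2, hb.2]⟩
  neg_mem' := fun ha => ⟨neg_mem ha.1, fun g => by rw [smul_neg, ha.2]⟩

/-- The stabilizer `G_P` of the ideal `P` in `G` (acting pointwise on subsets). -/
def idealStab (G : Type*) {R : Type*} [Group G] [Ring R] [MulSemiringAction G R]
    (P : TwoSidedIdeal R) : Subgroup G :=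
  MulAction.stabilizer G (P : Set R)

open TwoSidedIdeal (ker mem_ker)

namespace IsPrimeTwoSided

variable {R : Type*} [Ring R] {P : TwoSidedIdeal R}

theorem mem_or_mem (hP : IsPrimeTwoSided P) {a b : R} (h : ∀ r, a * r * b ∈ P) :
    a ∈ P ∨ b ∈ P := by
  -- ideals with `a ∈ A`, `b ∈ B` and `A * B ⊆ P`
  let A : TwoSidedIdeal R := .mk' {x | ∀ r, x * r * b ∈ P}
    (fun r => by simp)
    (fun hx hy r => by simpa [add_mul] using P.add_mem (hx r) (hy r))
    (fun hx r => by simpa using P.neg_mem (hx r))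
    (fun {s x} hx r => by simpa [mul_assoc] using P.mul_mem_left s _ (hx r))
    (fun {x s} hx r => by simpa [mul_assoc] using hx (s * r))
  let B : TwoSidedIdeal R := .mk' {y | ∀ x ∈ A, x * y ∈ P}
    (fun x _ => by simp)
    (fun hy hz x hx => by simpa [mul_add] using P.add_mem (hy x hx) (hz x hx))
    (fun hy x hx => by simpa using P.neg_mem (hy x hx))
    (fun {s y} hy x hx => by simpa [mul_assoc] using hy (x * s) (A.mul_mem_right x s hx))
    (fun {y s} hy x hx => by simpa [mul_assoc] using P.mul_mem_right _ s (hy x hx))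
  have hAB : ∀ x ∈ A, ∀ y ∈ B, x * y ∈ P := fun x hx y hy =>
    (TwoSidedIdeal.mem_mk' ..).mp hy x hx
  refine (hP.2 A B hAB).imp (fun hA => hA ((TwoSidedIdeal.mem_mk' ..).mpr h)) fun hB => hB ?_
  exact (TwoSidedIdeal.mem_mk' ..).mpr fun x hx => by
    simpa using (TwoSidedIdeal.mem_mk' ..).mp hx 1

theorem inf_le (hP : IsPrimeTwoSided P) {I J : TwoSidedIdeal R} (h : I ⊓ J ≤ P) :
    I ≤ P ∨ J ≤ P :=
  hP.2 I J fun _ ha _ hb => h ⟨I.mul_mem_right _ _ ha, J.mul_mem_left _ _ hb⟩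

theorem not_sInf_le (hP : IsPrimeTwoSided P) {S : Set (TwoSidedIdeal R)} (hS : S.Finite)
    (h : ∀ I ∈ S, ¬ I ≤ P) : ¬ sInf S ≤ P := by
  induction S, hS using Set.Finite.induction_on with
  | empty => simpa [top_le_iff] using hP.1
  | @insert I S _ _ ih =>
    rw [sInf_insert]
    intro hle
    rcases hP.inf_le hle with hI | hS
    · exact h I (Set.mem_insert I S) hI
    · exact ih (fun J hJ => h J (Set.mem_insert_of_mem I hJ)) hS

theorem mem_of_forall_mul_mem (hP : IsPrimeTwoSided P) {I : TwoSidedIdeal R} (hI : ¬ I ≤ P)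
    {s : R} (h : ∀ n ∈ I, n * s ∈ P) : s ∈ P := by
  obtain ⟨n, hnI, hnP⟩ := SetLike.not_le_iff_exists.mp hI
  exact (hP.mem_or_mem fun r => h _ (I.mul_mem_right n r hnI)).resolve_left hnP

end IsPrimeTwoSided

section Density

variable {R : Type*} [Ring R]

/-- The image of `A` in `R ⧸ I` has zero left annihilator. -/
def IsDenseMod (I : TwoSidedIdeal R) (A : Set R) : Prop :=
  ∀ s : R, (∀ a ∈ A, s * a ∈ I) → s ∈ I

theorem IsDenseMod.of_mul_subset {I : TwoSidedIdeal R} {A B C : Set R} (hA : IsDenseMod I A)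
    (hB : IsDenseMod I B) (hC : ∀ a ∈ A, ∀ b ∈ B, a * b ∈ C) : IsDenseMod I C :=
  fun s hs => hA s fun a ha => hB _ fun b hb => by simpa [mul_assoc] using hs _ (hC a ha b hb)

theorem IsPrimeTwoSided.isDenseMod {P I : TwoSidedIdeal R} (hP : IsPrimeTwoSided P)
    (hI : ¬ I ≤ P) : IsDenseMod P I := fun s hs => by
  obtain ⟨n, hnI, hnP⟩ := SetLike.not_le_iff_exists.mp hI
  refine (hP.mem_or_mem fun r => ?_).resolve_right hnP
  simpa [mul_assoc] using hs _ (I.mul_mem_left r n hnI)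

end Density

section Relations

variable {R S Q : Type*} [Ring R] [Ring S] [Ring Q]

theorem mul_mem_dom {Rel : R → R → Prop}
    (hleft : ∀ (s : R) {x y : R}, Rel x y → Rel (s * x) (s * y)) (s : R) :
    ∀ a ∈ {x | ∃ y, Rel x y}, s * a ∈ {x | ∃ y, Rel x y} :=
  fun _ ⟨b, hab⟩ => ⟨s * b, hleft s hab⟩

/-- A sub-`R`-bimodule of `R × R`, with `R` acting diagonally. -/
structure IsBimoduleRel (Rel : R → R → Prop) : Prop where
  zero : Rel 0 0
  add {x y x' y' : R} : Rel x y → Rel x' y' → Rel (x + x') (y + y')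
  mul_left (s : R) {x y : R} : Rel x y → Rel (s * x) (s * y)
  mul_right (s : R) {x y : R} : Rel x y → Rel (x * s) (y * s)

namespace IsBimoduleRel

variable {Rel : R → R → Prop}

theorem neg (hRel : IsBimoduleRel Rel) {x y : R} (h : Rel x y) : Rel (-x) (-y) := by
  simpa using hRel.mul_left (-1) h

theorem map (hRel : IsBimoduleRel Rel) {π : R →+* S} (hπ : Function.Surjective π) :
    IsBimoduleRel fun z w => ∃ x y, Rel x y ∧ π x = z ∧ π y = w where
  zero := ⟨0, 0, hRel.zero, map_zero π, map_zero π⟩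
  add := by
    rintro _ _ _ _ ⟨x, y, h, rfl, rfl⟩ ⟨x', y', h', rfl, rfl⟩
    exact ⟨x + x', y + y', hRel.add h h', map_add .., map_add ..⟩
  mul_left t := by
    rintro _ _ ⟨x, y, h, rfl, rfl⟩
    obtain ⟨s, rfl⟩ := hπ t
    exact ⟨s * x, s * y, hRel.mul_left s h, map_mul .., map_mul ..⟩
  mul_right t := by
    rintro _ _ ⟨x, y, h, rfl, rfl⟩
    obtain ⟨s, rfl⟩ := hπ t
    exact ⟨x * s, y * s, hRel.mul_right s h, map_mul .., map_mul ..⟩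

def domIdeal (hRel : IsBimoduleRel Rel) : TwoSidedIdeal R :=
  .mk' {x | ∃ y, Rel x y} ⟨0, hRel.zero⟩ (fun ⟨_, h⟩ ⟨_, h'⟩ => ⟨_, hRel.add h h'⟩)
    (fun ⟨_, h⟩ => ⟨_, hRel.neg h⟩) (fun ⟨_, h⟩ => ⟨_, hRel.mul_left _ h⟩)
    (fun ⟨_, h⟩ => ⟨_, hRel.mul_right _ h⟩)

theorem mem_domIdeal (hRel : IsBimoduleRel Rel) {x : R} : x ∈ hRel.domIdeal ↔ ∃ y, Rel x y :=
  TwoSidedIdeal.mem_mk' ..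

end IsBimoduleRel

/-- The graph of left multiplication by `q`, pulled back along `ι ∘ π`. -/
def graphRel (ι : S →+* Q) (π : R →+* S) (q : Q) (x y : R) : Prop :=
  q * ι (π x) = ι (π y)

variable {ι : S →+* Q} {π : R →+* S} {q : Q}

theorem graphRel_mul_right {x y : R} (h : graphRel ι π q x y) (s : R) :
    graphRel ι π q (x * s) (y * s) := by
  rw [graphRel, map_mul, map_mul, ← mul_assoc, h, map_mul, map_mul]

theorem graphRel_mul_left (hq : q ∈ Subring.center Q) (s : R) {x y : R} (h : graphRel ι π q x y) :
    graphRel ι π q (s * x) (s * y) := by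
  rw [graphRel, map_mul, map_mul, ← mul_assoc, ← Subring.mem_center_iff.mp hq, mul_assoc, h,
    map_mul, map_mul]

theorem isBimoduleRel_graphRel (hq : q ∈ Subring.center Q) : IsBimoduleRel (graphRel ι π q) where
  zero := by simp [graphRel]
  add h h' := by rw [graphRel, map_add, map_add, mul_add, h, h', map_add, map_add]
  mul_left s := graphRel_mul_left hq s
  mul_right s := fun h => graphRel_mul_right h s

theorem graphRel.mem_ker (hι : Function.Injective ι) {x y : R} (h : graphRel ι π q x y)
    (hx : x ∈ ker π) : y ∈ ker π := by
  rw [TwoSidedIdeal.mem_ker] at hx ⊢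
  exact hι (by rw [← h, hx, map_zero, mul_zero])

theorem graphRel_smul {H : Type*} [Monoid H] [SMul H R] [SMul H S] [MulSemiringAction H Q]
    (hπH : ∀ (h : H) (r : R), π (h • r) = h • π r) (hιH : ∀ (h : H) (z : S), h • ι z = ι (h • z))
    {x y : R} (h : graphRel ι π q x y) (g : H) : graphRel ι π (g • q) (g • x) (g • y) := by
  rw [graphRel, hπH, hπH, ← hιH, ← hιH, ← smul_mul', h]

end Relations

namespace IsMartindaleQuot

variable {R S Q : Type*} [Ring R] [Ring S] [Ring Q] {π : R →+* S} {ι : S →+* Q}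

theorem mem_center_of_commute (hQ : IsMartindaleQuot ι) {q : Q}
    (h : ∀ z : S, q * ι z = ι z * q) : q ∈ Subring.center Q := by
  refine Subring.mem_center_iff.mpr fun u => ?_
  obtain ⟨J, hJ, hu⟩ := hQ.dom u
  refine sub_eq_zero.mp (hQ.ann _ J hJ fun x hx => ?_)
  obtain ⟨r, hr⟩ := hu x hx
  rw [sub_mul, mul_assoc, h, ← mul_assoc, hr, mul_assoc, hr, h, sub_self]

theorem eq_zero_of_isDenseMod (hQ : IsMartindaleQuot ι) (hπ : Function.Surjective π)
    {A : Set R} (hA_left : ∀ s, ∀ a ∈ A, s * a ∈ A) (hA : IsDenseMod (ker π) A)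
    {q : Q} (hq : ∀ a ∈ A, q * ι (π a) = 0) : q = 0 := by
  -- the largest ideal of `S` killed by `q` from the left
  let T : TwoSidedIdeal S := .mk' {z | ∀ t, q * ι (t * z) = 0} (by simp)
    (fun hz hw t => by rw [mul_add, map_add, mul_add, hz t, hw t, add_zero])
    (fun hz t => by rw [mul_neg, map_neg, mul_neg, hz t, neg_zero])
    (fun {u _} hz t => by rw [← mul_assoc]; exact hz (t * u))
    (fun {_ u} hz t => by rw [← mul_assoc, map_mul, ← mul_assoc, hz t, zero_mul])
  have hAT : ∀ a ∈ A, π a ∈ T := fun a ha => (TwoSidedIdeal.mem_mk' ..).mpr fun t => by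
    obtain ⟨s, rfl⟩ := hπ t
    rw [← map_mul]
    exact hq _ (hA_left s a ha)
  refine hQ.ann q T (fun r hr => ?_) fun z hz => by simpa using (TwoSidedIdeal.mem_mk' ..).mp hz 1
  obtain ⟨s, rfl⟩ := hπ r
  refine (mem_ker _).mp (hA s fun a ha => ?_)
  rw [mem_ker, map_mul]
  exact hr _ (hAT a ha)

theorem eq_of_graphRel (hQ : IsMartindaleQuot ι) (hπ : Function.Surjective π)
    {Rel : R → R → Prop} (hleft : ∀ (s : R) {x y : R}, Rel x y → Rel (s * x) (s * y))
    (hdense : IsDenseMod (ker π) {x | ∃ y, Rel x y}) {q q' : Q}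
    (hq : Rel ≤ graphRel ι π q) (hq' : Rel ≤ graphRel ι π q') : q = q' := by
  refine sub_eq_zero.mp (hQ.eq_zero_of_isDenseMod hπ (mul_mem_dom hleft)
    hdense fun a ⟨b, hab⟩ => ?_)
  rw [sub_mul, hq a b hab, hq' a b hab, sub_self]

theorem isDenseMod_dom_graphRel (hQ : IsMartindaleQuot ι) (hπ : Function.Surjective π) (q : Q) :
    IsDenseMod (ker π) {x | ∃ y, graphRel ι π q x y} := by
  intro s hs
  obtain ⟨W, hW, hWq⟩ := hQ.dom q
  refine (mem_ker _).mpr (hW _ fun z hz => ?_)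
  obtain ⟨a, rfl⟩ := hπ z
  obtain ⟨r, hr⟩ := hWq _ hz
  obtain ⟨b, rfl⟩ := hπ r
  rw [← map_mul]
  exact (mem_ker _).mp (hs a ⟨b, hr⟩)

theorem exists_graphRel (hQ : IsMartindaleQuot ι) (hπ : Function.Surjective π)
    {Rel : R → R → Prop} (hRel : IsBimoduleRel Rel)
    (hfun : ∀ x y, Rel x y → x ∈ ker π → y ∈ ker π)
    (hdense : IsDenseMod (ker π) {x | ∃ y, Rel x y}) :
    ∃ q : Q, Rel ≤ graphRel ι π q := by
  let Rel' : S → S → Prop := fun z w => ∃ x y, Rel x y ∧ π x = z ∧ π y = w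
  have hRel' : IsBimoduleRel Rel' := hRel.map hπ
  have hRel'_fun : ∀ {z w w'}, Rel' z w → Rel' z w' → w = w' := by
    rintro _ _ _ ⟨x, y, hxy, rfl, rfl⟩ ⟨x', y', hxy', hx, rfl⟩
    have h := hfun _ _ (hRel.add hxy (hRel.neg hxy')) (by simp [mem_ker, hx])
    simpa [mem_ker, ← sub_eq_add_neg, sub_eq_zero] using h
  let f : S → S := fun z => Classical.epsilon (Rel' z)
  have hf : ∀ {z w}, Rel' z w → f z = w := fun h => hRel'_fun (Classical.epsilon_spec ⟨_, h⟩) h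
  have hI : ∀ r : S, (∀ z ∈ hRel'.domIdeal, r * z = 0) → r = 0 := by
    intro r hr
    obtain ⟨s, rfl⟩ := hπ r
    refine (mem_ker _).mp (hdense s fun a ⟨b, hab⟩ => ?_)
    rw [mem_ker, map_mul]
    exact hr _ (hRel'.mem_domIdeal.mpr ⟨_, a, b, hab, rfl, rfl⟩)
  obtain ⟨q, hq⟩ := hQ.lift hRel'.domIdeal f hI
    (fun z hz z' hz' => by
      obtain ⟨w, hw⟩ := hRel'.mem_domIdeal.mp hz
      obtain ⟨w', hw'⟩ := hRel'.mem_domIdeal.mp hz'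
      rw [hf hw, hf hw', hf (hRel'.add hw hw')])
    (fun z hz t => by
      obtain ⟨w, hw⟩ := hRel'.mem_domIdeal.mp hz
      rw [hf hw, hf (hRel'.mul_right t hw)])
  refine ⟨q, fun x y hxy => ?_⟩
  have hxy' : Rel' (π x) (π y) := ⟨x, y, hxy, rfl, rfl⟩
  rw [graphRel, hq _ (hRel'.mem_domIdeal.mpr ⟨_, hxy'⟩), hf hxy']

theorem mem_center_of_graphRel (hQ : IsMartindaleQuot ι) (hπ : Function.Surjective π)
    {Rel : R → R → Prop} (hleft : ∀ (s : R) {x y : R}, Rel x y → Rel (s * x) (s * y))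
    (hdense : IsDenseMod (ker π) {x | ∃ y, Rel x y}) {q : Q}
    (hq : Rel ≤ graphRel ι π q) : q ∈ Subring.center Q := by
  refine hQ.mem_center_of_commute fun z => ?_
  obtain ⟨s, rfl⟩ := hπ z
  refine sub_eq_zero.mp (hQ.eq_zero_of_isDenseMod hπ (mul_mem_dom hleft)
    hdense fun a ⟨b, hab⟩ => ?_)
  have hsab : graphRel ι π q (s * a) (s * b) := hq _ _ (hleft s hab)
  rw [graphRel, map_mul, map_mul] at hsab
  rw [sub_mul, mul_assoc, hsab, mul_assoc, hq a b hab, ← map_mul, ← map_mul, sub_self]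

theorem smul_eq_of_graphRel {H : Type*} [Group H] [MulAction H R] [SMul H S]
    [MulSemiringAction H Q] (hQ : IsMartindaleQuot ι) (hπ : Function.Surjective π)
    (hπH : ∀ (h : H) (r : R), π (h • r) = h • π r) (hιH : ∀ (h : H) (z : S), h • ι z = ι (h • z))
    {Rel : R → R → Prop} (hleft : ∀ (s : R) {x y : R}, Rel x y → Rel (s * x) (s * y))
    (hdense : IsDenseMod (ker π) {x | ∃ y, Rel x y})
    (hstable : ∀ (h : H) x y, Rel x y → Rel (h • x) (h • y)) {q : Q}
    (hq : Rel ≤ graphRel ι π q) (h : H) : h • q = q :=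
  hQ.eq_of_graphRel hπ hleft hdense (fun x y hxy => by
    simpa using graphRel_smul hπH hιH (hq _ _ (hstable h⁻¹ x y hxy)) h) hq

end IsMartindaleQuot

theorem graphRel_le_graphRel {R S₁ Q₁ S₂ Q₂ : Type*} [Ring R] [Ring S₁] [Ring Q₁] [Ring S₂]
    [Ring Q₂] {π₁ : R →+* S₁} {ι₁ : S₁ →+* Q₁} {π₂ : R →+* S₂} {ι₂ : S₂ →+* Q₂}
    (hι₁ : Function.Injective ι₁) (hQ₂ : IsMartindaleQuot ι₂) (hπ₂ : Function.Surjective π₂)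
    (hker : ker π₁ ≤ ker π₂) {Rel : R → R → Prop}
    (hleft : ∀ (s : R) {x y : R}, Rel x y → Rel (s * x) (s * y))
    (hdense : IsDenseMod (ker π₂) {x | ∃ y, Rel x y}) {q : Q₁} {d : Q₂}
    (hq : Rel ≤ graphRel ι₁ π₁ q) (hd : Rel ≤ graphRel ι₂ π₂ d) :
    graphRel ι₁ π₁ q ≤ graphRel ι₂ π₂ d := by
  intro x y hxy
  refine sub_eq_zero.mp (hQ₂.eq_zero_of_isDenseMod hπ₂ (mul_mem_dom hleft)
    hdense fun a ⟨b, hab⟩ => ?_)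
  -- `q` sends `x * a` both to `x * b` and to `y * a`
  have h₁ : x * b - y * a ∈ ker π₁ := (mem_ker _).mpr <| hι₁ <| by
    rw [map_sub, map_sub, map_zero, ← hq _ _ (hleft x hab), ← graphRel_mul_right hxy a,
      sub_self]
  have h₂ : π₂ (x * b) = π₂ (y * a) := by
    rw [← sub_eq_zero, ← map_sub]
    exact (mem_ker _).mp (hker h₁)
  rw [sub_mul, mul_assoc, ← map_mul ι₂, ← map_mul π₂, hd _ _ (hleft x hab), h₂, map_mul,
    map_mul, sub_self]

theorem smul_set_eq_of_smul_set_subset {G β : Type*} [Group G] [MulAction G β] {s : Set β}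
    (hfin : (MulAction.orbit G s).Finite) {g : G} (h : g • s ⊆ s) : g • s = s := by
  have hidx : (MulAction.stabilizer G s).index ≠ 0 := by
    rw [MulAction.index_stabilizer]
    exact ((Set.ncard_pos hfin).mpr ⟨s, MulAction.mem_orbit_self s⟩).ne'
  obtain ⟨n, hn, -, hgn⟩ := Subgroup.exists_pow_mem_of_index_ne_zero hidx g
  have hpow : ∀ m : ℕ, g ^ m • s ⊆ s := fun m => by
    induction m with
    | zero => simp
    | succ m ih => rw [pow_succ', mul_smul]; exact (Set.smul_set_mono ih).trans h
  refine h.antisymm ?_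
  calc s = g ^ n • s := (MulAction.mem_stabilizer_iff.mp hgn).symm
    _ = g • g ^ (n - 1) • s := by rw [← mul_smul, ← pow_succ', Nat.sub_add_cancel hn]
    _ ⊆ g • s := Set.smul_set_mono (hpow _)

section Orbit

variable (G : Type*) {R : Type*} [Group G] [Ring R] [MulSemiringAction G R]
  (P : TwoSidedIdeal R)

/-- The ideal `(P : G) = ⋂_g g⁻¹ P`. -/
def orbitInf : TwoSidedIdeal R :=
  ⨅ g : G, P.comap (MulSemiringAction.toRingHom G R g)

/-- The ideal `N`: the intersection of the members of the orbit of `P` other than `P`. -/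
def otherOrbitInf : TwoSidedIdeal R :=
  sInf ((fun g : G => P.comap (MulSemiringAction.toRingHom G R g)) '' (idealStab G P : Set G)ᶜ)

variable {G P}

theorem mem_orbitInf {r : R} : r ∈ orbitInf G P ↔ ∀ g : G, g • r ∈ P := by
  simp [orbitInf, TwoSidedIdeal.mem_iInf, TwoSidedIdeal.mem_comap]

theorem orbitInf_le : orbitInf G P ≤ P := fun r hr => by
  simpa using mem_orbitInf.mp hr 1

theorem smul_mem_of_mem_otherOrbitInf {r : R} (hr : r ∈ otherOrbitInf G P) {g : G}
    (hg : g ∉ idealStab G P) : g • r ∈ P := by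
  have := (TwoSidedIdeal.mem_sInf (R := R)).mp hr _ ⟨g, hg, rfl⟩
  simpa [TwoSidedIdeal.mem_comap] using this

theorem smul_mem_of_mem_idealStab {g : G} (hg : g ∈ idealStab G P) {r : R} (hr : r ∈ P) :
    g • r ∈ P := by
  have : g • r ∈ g • (P : Set R) := Set.smul_mem_smul_set hr
  rwa [MulAction.mem_stabilizer_iff.mp hg] at this

theorem mem_orbitInf_of_mem_otherOrbitInf {r : R} (hN : r ∈ otherOrbitInf G P) (hP : r ∈ P) :
    r ∈ orbitInf G P :=
  mem_orbitInf.mpr fun g => by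
    by_cases hg : g ∈ idealStab G P
    · exact smul_mem_of_mem_idealStab hg hP
    · exact smul_mem_of_mem_otherOrbitInf hN hg

theorem coe_comap_toRingHom (g : G) :
    (P.comap (MulSemiringAction.toRingHom G R g) : Set R) = g⁻¹ • (P : Set R) := by
  ext r
  simp [TwoSidedIdeal.mem_comap, Set.mem_smul_set_iff_inv_smul_mem]

theorem not_otherOrbitInf_le (hP : IsPrimeTwoSided P)
    (hfin : (MulAction.orbit G (P : Set R)).Finite) : ¬ otherOrbitInf G P ≤ P := by
  refine hP.not_sInf_le ?_ ?_
  · refine (hfin.preimage SetLike.coe_injective.injOn).subset ?_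
    rintro _ ⟨g, -, rfl⟩
    rw [Set.mem_preimage, coe_comap_toRingHom]
    exact MulAction.mem_orbit _ g⁻¹
  · rintro _ ⟨g, hg, rfl⟩ hle
    have hsub : g⁻¹ • (P : Set R) ⊆ P := by rw [← coe_comap_toRingHom]; exact hle
    exact hg (inv_mem_iff.mp (smul_set_eq_of_smul_set_subset hfin hsub))

theorem IsDenseMod.of_orbitInf (hP : IsPrimeTwoSided P)
    (hfin : (MulAction.orbit G (P : Set R)).Finite) {A : Set R}
    (hA : IsDenseMod (orbitInf G P) A) : IsDenseMod P A := fun s hs =>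
  hP.mem_of_forall_mul_mem (not_otherOrbitInf_le hP hfin) fun n hn =>
    orbitInf_le <| hA _ fun a ha => by
      rw [mul_assoc]
      exact mem_orbitInf_of_mem_otherOrbitInf (TwoSidedIdeal.mul_mem_right _ _ _ hn)
        (P.mul_mem_left _ _ (hs a ha))

theorem mem_of_rel_of_mem (hP : IsPrimeTwoSided P) (hfin : (MulAction.orbit G (P : Set R)).Finite)
    {Rel : R → R → Prop} (hleft : ∀ (s : R) {x y : R}, Rel x y → Rel (s * x) (s * y))
    (hfun : ∀ x y, Rel x y → x ∈ orbitInf G P → y ∈ orbitInf G P) {x y : R} (hxy : Rel x y)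
    (hx : x ∈ P) : y ∈ P :=
  hP.mem_of_forall_mul_mem (not_otherOrbitInf_le hP hfin) fun n hn =>
    orbitInf_le <| hfun _ _ (hleft n hxy) <|
      mem_orbitInf_of_mem_otherOrbitInf (TwoSidedIdeal.mul_mem_right _ _ _ hn)
        (P.mul_mem_left _ _ hx)

theorem IsDenseMod.orbitInf_of_smul {A B : Set R} (hA : IsDenseMod P A)
    (hB : ∀ g : G, ∀ a ∈ A, g • a ∈ B) : IsDenseMod (orbitInf G P) B := fun s hs =>
  mem_orbitInf.mpr fun g => hA _ fun a ha => by
    simpa [smul_mul'] using mem_orbitInf.mp (hs _ (hB g⁻¹ a ha)) g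

end Orbit

section OrbitGraph

variable {G R S Q : Type*} [Group G] [Ring R] [MulSemiringAction G R] [Ring S] [Ring Q]
  {ι : S →+* Q} {π : R →+* S} {d : Q}

def orbitGraphRel (G : Type*) [Group G] [MulSemiringAction G R] (ι : S →+* Q) (π : R →+* S)
    (d : Q) (u v : R) : Prop :=
  ∀ g : G, graphRel ι π d (g • u) (g • v)

theorem isBimoduleRel_orbitGraphRel (hd : d ∈ Subring.center Q) :
    IsBimoduleRel (orbitGraphRel G ι π d) where
  zero g := by simpa using (isBimoduleRel_graphRel (ι := ι) (π := π) hd).zero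
  add h h' g := by simpa [smul_add] using (isBimoduleRel_graphRel hd).add (h g) (h' g)
  mul_left s := fun h g => by simpa [smul_mul'] using graphRel_mul_left hd (g • s) (h g)
  mul_right s := fun h g => by simpa [smul_mul'] using graphRel_mul_right (h g) (g • s)

theorem orbitGraphRel_smul {u v : R} (h : orbitGraphRel G ι π d u v) (g : G) :
    orbitGraphRel G ι π d (g • u) (g • v) := fun g' => by
  simpa [mul_smul] using h (g' * g)

end OrbitGraph

theorem exists_ringEquiv_of_rel {A B : Type*} [Ring A] [Ring B] {ρ : A → B → Prop}
    (h_unique : ∀ a, ∃! b, ρ a b) (h_surj : ∀ b, ∃ a, ρ a b)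
    (h_add : ∀ {a a' b b'}, ρ a b → ρ a' b' → ρ (a + a') (b + b'))
    (h_mul : ∀ {a a' b b'}, ρ a b → ρ a' b' → ρ (a * a') (b * b'))
    (h_ker : ∀ a, ρ a 0 → a = 0) : ∃ e : A ≃+* B, ∀ a, ρ a (e a) := by
  choose f hf hf_unique using h_unique
  have hf_eq : ∀ {a b}, ρ a b → f a = b := fun h => (hf_unique _ _ h).symm
  let f' : A →+ B := AddMonoidHom.mk' f fun a a' => hf_eq (h_add (hf a) (hf a'))
  have hinj : Function.Injective f :=
    (injective_iff_map_eq_zero f').mpr fun a ha => h_ker a (ha ▸ hf a)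
  have hsurj : Function.Surjective f := fun b => (h_surj b).imp fun _ => hf_eq
  exact ⟨{ Equiv.ofBijective f ⟨hinj, hsurj⟩ with
    map_mul' := fun a a' => hf_eq (h_mul (hf a) (hf a'))
    map_add' := f'.map_add }, hf⟩

theorem mem_invCenter {G Q : Type*} [Group G] [Ring Q] [MulSemiringAction G Q] {q : Q} :
    q ∈ invCenter G Q ↔ q ∈ Subring.center Q ∧ ∀ g : G, g • q = q :=
  Iff.rfl

/-- `R₁ = R/(P:G)` and `R₂ = R/P`, with Martindale quotient rings `Q₁`, `Q₂` and compatible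
actions of `G` and of `G_P`. -/
structure PrimeOrbitSetup (G : Type*) {R R₁ Q₁ R₂ Q₂ : Type*} [Group G] [Ring R]
    [MulSemiringAction G R] [Ring R₁] [MulSemiringAction G R₁] [Ring Q₁]
    [MulSemiringAction G Q₁] (P : TwoSidedIdeal R) [Ring R₂] [MulSemiringAction (idealStab G P) R₂]
    [Ring Q₂] [MulSemiringAction (idealStab G P) Q₂] (π₁ : R →+* R₁) (ι₁ : R₁ →+* Q₁)
    (π₂ : R →+* R₂) (ι₂ : R₂ →+* Q₂) : Prop where
  prime : IsPrimeTwoSided P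
  finite_orbit : (MulAction.orbit G (P : Set R)).Finite
  surjective₁ : Function.Surjective π₁
  ker₁ : ∀ r : R, π₁ r = 0 ↔ ∀ g : G, g • r ∈ P
  equivariant₁ : ∀ (g : G) (r : R), π₁ (g • r) = g • π₁ r
  quot₁ : IsMartindaleQuot ι₁
  quot_equivariant₁ : ∀ (g : G) (x : R₁), g • ι₁ x = ι₁ (g • x)
  surjective₂ : Function.Surjective π₂
  ker₂ : ∀ r : R, π₂ r = 0 ↔ r ∈ P
  equivariant₂ : ∀ (h : idealStab G P) (r : R), π₂ ((h : G) • r) = h • π₂ r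
  quot₂ : IsMartindaleQuot ι₂
  quot_equivariant₂ : ∀ (h : idealStab G P) (x : R₂), h • ι₂ x = ι₂ (h • x)

namespace PrimeOrbitSetup

variable {G R R₁ Q₁ R₂ Q₂ : Type*} [Group G] [Ring R] [MulSemiringAction G R] [Ring R₁]
  [MulSemiringAction G R₁] [Ring Q₁] [MulSemiringAction G Q₁] {P : TwoSidedIdeal R} [Ring R₂]
  [MulSemiringAction (idealStab G P) R₂] [Ring Q₂] [MulSemiringAction (idealStab G P) Q₂]
  {π₁ : R →+* R₁} {ι₁ : R₁ →+* Q₁} {π₂ : R →+* R₂} {ι₂ : R₂ →+* Q₂}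

theorem ker₁_eq (S : PrimeOrbitSetup G P π₁ ι₁ π₂ ι₂) : ker π₁ = orbitInf G P :=
  TwoSidedIdeal.ext fun r => by rw [mem_ker, S.ker₁, mem_orbitInf]

theorem ker₂_eq (S : PrimeOrbitSetup G P π₁ ι₁ π₂ ι₂) : ker π₂ = P :=
  TwoSidedIdeal.ext fun r => by rw [mem_ker, S.ker₂]

theorem ker_le (S : PrimeOrbitSetup G P π₁ ι₁ π₂ ι₂) : ker π₁ ≤ ker π₂ := by
  rw [S.ker₁_eq, S.ker₂_eq]
  exact orbitInf_le

theorem isDenseMod_ker₂ (S : PrimeOrbitSetup G P π₁ ι₁ π₂ ι₂) {A : Set R}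
    (hA : IsDenseMod (ker π₁) A) : IsDenseMod (ker π₂) A := by
  rw [S.ker₁_eq] at hA
  rw [S.ker₂_eq]
  exact hA.of_orbitInf S.prime S.finite_orbit

theorem isDenseMod_dom (S : PrimeOrbitSetup G P π₁ ι₁ π₂ ι₂) (c : Q₁) :
    IsDenseMod (ker π₂) {x | ∃ y, graphRel ι₁ π₁ c x y} :=
  S.isDenseMod_ker₂ (S.quot₁.isDenseMod_dom_graphRel S.surjective₁ c)

theorem graphRel_mem_ker₂ (S : PrimeOrbitSetup G P π₁ ι₁ π₂ ι₂) {c : Q₁}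
    (hc : c ∈ Subring.center Q₁) {x y : R} (hxy : graphRel ι₁ π₁ c x y) (hx : x ∈ ker π₂) :
    y ∈ ker π₂ := by
  rw [S.ker₂_eq] at hx ⊢
  refine mem_of_rel_of_mem S.prime S.finite_orbit (graphRel_mul_left hc) (fun x y h hx => ?_) hxy hx
  rw [← S.ker₁_eq] at hx ⊢
  exact h.mem_ker S.quot₁.inj hx

theorem existsUnique_graphRel_le (S : PrimeOrbitSetup G P π₁ ι₁ π₂ ι₂) (c : invCenter G Q₁) :
    ∃! d : invCenter (idealStab G P) Q₂, graphRel ι₁ π₁ c ≤ graphRel ι₂ π₂ d := by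
  obtain ⟨hc, hcG⟩ := mem_invCenter.mp c.2
  have hdense := S.isDenseMod_dom c
  obtain ⟨d, hd⟩ := S.quot₂.exists_graphRel S.surjective₂ (isBimoduleRel_graphRel hc)
    (fun _ _ => S.graphRel_mem_ker₂ hc) hdense
  have hstable (h : idealStab G P) (x y : R) (hxy : graphRel ι₁ π₁ c x y) :
      graphRel ι₁ π₁ c (h • x) (h • y) := by
    simpa [hcG, Subgroup.smul_def] using
      graphRel_smul S.equivariant₁ S.quot_equivariant₁ hxy (h : G)
  have hdZ := S.quot₂.mem_center_of_graphRel S.surjective₂ (graphRel_mul_left hc) hdense hd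
  have hdG := S.quot₂.smul_eq_of_graphRel S.surjective₂ S.equivariant₂ S.quot_equivariant₂
    (graphRel_mul_left hc) hdense hstable hd
  refine ⟨⟨d, mem_invCenter.mpr ⟨hdZ, hdG⟩⟩, hd, fun d' hd' => Subtype.ext ?_⟩
  exact S.quot₂.eq_of_graphRel S.surjective₂ (graphRel_mul_left hc) hdense hd' hd

theorem graphRel_le_add (S : PrimeOrbitSetup G P π₁ ι₁ π₂ ι₂) {c c' : Q₁}
    (hc : c ∈ Subring.center Q₁) (hc' : c' ∈ Subring.center Q₁) {d d' : Q₂}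
    (hd : graphRel ι₁ π₁ c ≤ graphRel ι₂ π₂ d) (hd' : graphRel ι₁ π₁ c' ≤ graphRel ι₂ π₂ d') :
    graphRel ι₁ π₁ (c + c') ≤ graphRel ι₂ π₂ (d + d') := by
  refine graphRel_le_graphRel (Rel := fun x y => ∃ y₁ y₂, graphRel ι₁ π₁ c x y₁ ∧
      graphRel ι₁ π₁ c' x y₂ ∧ y₁ + y₂ = y) S.quot₁.inj S.quot₂ S.surjective₂ S.ker_le
    ?_ ?_ ?_ ?_
  · rintro s x _ ⟨y₁, y₂, h₁, h₂, rfl⟩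
    exact ⟨_, _, graphRel_mul_left hc s h₁, graphRel_mul_left hc' s h₂, (mul_add ..).symm⟩
  · refine S.isDenseMod_ker₂ <| (S.quot₁.isDenseMod_dom_graphRel S.surjective₁ c).of_mul_subset
      (S.quot₁.isDenseMod_dom_graphRel S.surjective₁ c') fun a ⟨b, hab⟩ a' ⟨b', hab'⟩ => ?_
    exact ⟨_, _, _, graphRel_mul_right hab a', graphRel_mul_left hc' a hab', rfl⟩
  · rintro x _ ⟨y₁, y₂, h₁, h₂, rfl⟩
    rw [graphRel, add_mul, h₁, h₂, map_add, map_add]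
  · rintro x _ ⟨y₁, y₂, h₁, h₂, rfl⟩
    rw [graphRel, add_mul, hd _ _ h₁, hd' _ _ h₂, map_add, map_add]

theorem graphRel_le_mul (S : PrimeOrbitSetup G P π₁ ι₁ π₂ ι₂) {c c' : Q₁}
    (hc : c ∈ Subring.center Q₁) (hc' : c' ∈ Subring.center Q₁) {d d' : Q₂}
    (hd : graphRel ι₁ π₁ c ≤ graphRel ι₂ π₂ d) (hd' : graphRel ι₁ π₁ c' ≤ graphRel ι₂ π₂ d') :
    graphRel ι₁ π₁ (c * c') ≤ graphRel ι₂ π₂ (d * d') := by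
  refine graphRel_le_graphRel (Rel := fun x z => ∃ y, graphRel ι₁ π₁ c' x y ∧
      graphRel ι₁ π₁ c y z) S.quot₁.inj S.quot₂ S.surjective₂ S.ker_le ?_ ?_ ?_ ?_
  · rintro s x z ⟨y, h₁, h₂⟩
    exact ⟨_, graphRel_mul_left hc' s h₁, graphRel_mul_left hc s h₂⟩
  · refine S.isDenseMod_ker₂ <| (S.quot₁.isDenseMod_dom_graphRel S.surjective₁ c').of_mul_subset
      (S.quot₁.isDenseMod_dom_graphRel S.surjective₁ c) fun a' ⟨b', hab'⟩ a ⟨b, hab⟩ => ?_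
    exact ⟨_, _, graphRel_mul_right hab' a, graphRel_mul_left hc b' hab⟩
  · rintro x z ⟨y, h₁, h₂⟩
    rw [graphRel, mul_assoc, h₁, h₂]
  · rintro x z ⟨y, h₁, h₂⟩
    rw [graphRel, mul_assoc, hd' _ _ h₁, hd _ _ h₂]

theorem eq_zero_of_graphRel_le_zero (S : PrimeOrbitSetup G P π₁ ι₁ π₂ ι₂) {c : Q₁}
    (hc : c ∈ Subring.center Q₁) (hcG : ∀ g : G, g • c = c)
    (h : graphRel ι₁ π₁ c ≤ graphRel ι₂ π₂ 0) : c = 0 := by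
  refine S.quot₁.eq_zero_of_isDenseMod S.surjective₁ (mul_mem_dom (graphRel_mul_left hc))
    (S.quot₁.isDenseMod_dom_graphRel S.surjective₁ c) fun a ⟨b, hab⟩ => ?_
  -- `c` is `G`-invariant, so every translate of `b` lies in `P`
  have hb : π₁ b = 0 := (S.ker₁ b).mpr fun g => by
    have hg := h _ _ (by simpa [hcG] using graphRel_smul S.equivariant₁ S.quot_equivariant₁ hab g)
    exact (S.ker₂ _).mp (S.quot₂.inj (by rw [← hg, zero_mul, map_zero]))
  rw [hab, hb, map_zero]

theorem isDenseMod_pairs (S : PrimeOrbitSetup G P π₁ ι₁ π₂ ι₂) (d : Q₂) :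
    IsDenseMod P {a | ∃ b, a ∈ otherOrbitInf G P ∧ b ∈ otherOrbitInf G P ∧
      graphRel ι₂ π₂ d a b} := by
  have hdom := S.quot₂.isDenseMod_dom_graphRel S.surjective₂ d
  rw [S.ker₂_eq] at hdom
  refine hdom.of_mul_subset (S.prime.isDenseMod (not_otherOrbitInf_le S.prime S.finite_orbit))
    fun a ⟨b, hab⟩ n hn => ?_
  exact ⟨b * n, TwoSidedIdeal.mul_mem_left _ a n hn, TwoSidedIdeal.mul_mem_left _ b n hn,
    graphRel_mul_right hab n⟩

theorem pairs_le_orbitGraphRel (S : PrimeOrbitSetup G P π₁ ι₁ π₂ ι₂) {d : Q₂}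
    (hdG : ∀ h : idealStab G P, h • d = d) :
    (fun a b => a ∈ otherOrbitInf G P ∧ b ∈ otherOrbitInf G P ∧ graphRel ι₂ π₂ d a b) ≤
      orbitGraphRel G ι₂ π₂ d := by
  rintro a b ⟨ha, hb, hab⟩ g
  by_cases hg : g ∈ idealStab G P
  · simpa [hdG] using graphRel_smul S.equivariant₂ S.quot_equivariant₂ hab ⟨g, hg⟩
  · have hzero : ∀ x ∈ otherOrbitInf G P, π₂ (g • x) = 0 := fun x hx =>
      (S.ker₂ _).mpr (smul_mem_of_mem_otherOrbitInf hx hg)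
    rw [graphRel, hzero a ha, hzero b hb, map_zero, mul_zero]

theorem orbitGraphRel_mem_ker₁ (S : PrimeOrbitSetup G P π₁ ι₁ π₂ ι₂) {d : Q₂} {u v : R}
    (h : orbitGraphRel G ι₂ π₂ d u v) (hu : u ∈ ker π₁) : v ∈ ker π₁ := by
  rw [mem_ker, S.ker₁] at hu ⊢
  exact fun g => (S.ker₂ _).mp <| (mem_ker _).mp <|
    (h g).mem_ker S.quot₂.inj <| (mem_ker _).mpr <| (S.ker₂ _).mpr (hu g)

theorem exists_graphRel_le (S : PrimeOrbitSetup G P π₁ ι₁ π₂ ι₂)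
    (d : invCenter (idealStab G P) Q₂) :
    ∃ c : invCenter G Q₁, graphRel ι₁ π₁ c ≤ graphRel ι₂ π₂ d := by
  obtain ⟨hd, hdG⟩ := mem_invCenter.mp d.2
  have hRel := isBimoduleRel_orbitGraphRel (G := G) (ι := ι₂) (π := π₂) hd
  have hpairs := S.pairs_le_orbitGraphRel hdG
  have hdense : IsDenseMod (ker π₁) {x | ∃ y, orbitGraphRel G ι₂ π₂ d x y} := by
    rw [S.ker₁_eq]
    exact (S.isDenseMod_pairs d).orbitInf_of_smul fun g a ⟨b, hab⟩ =>
      ⟨g • b, orbitGraphRel_smul (hpairs a b hab) g⟩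
  obtain ⟨c, hc⟩ := S.quot₁.exists_graphRel S.surjective₁ hRel
    (fun _ _ => S.orbitGraphRel_mem_ker₁) hdense
  have hcZ := S.quot₁.mem_center_of_graphRel S.surjective₁ hRel.mul_left hdense hc
  have hcG := S.quot₁.smul_eq_of_graphRel S.surjective₁ S.equivariant₁ S.quot_equivariant₁
    hRel.mul_left hdense (fun g _ _ h => orbitGraphRel_smul h g) hc
  refine ⟨⟨c, mem_invCenter.mpr ⟨hcZ, hcG⟩⟩, graphRel_le_graphRel S.quot₁.inj S.quot₂
    S.surjective₂ S.ker_le ?_ (S.ker₂_eq ▸ S.isDenseMod_pairs d) (hpairs.trans hc)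
    fun a b h => h.2.2⟩
  rintro s a b ⟨ha, hb, hab⟩
  exact ⟨TwoSidedIdeal.mul_mem_left _ s a ha, TwoSidedIdeal.mul_mem_left _ s b hb,
    graphRel_mul_left hd s hab⟩

end PrimeOrbitSetup

theorem invariant_centroid_iso_of_finite_orbit_general
    {G R : Type*} [Group G] [Ring R]
    [MulSemiringAction G R]
    (P : TwoSidedIdeal R) (hP : IsPrimeTwoSided P)
    (hfin : (MulAction.orbit G (P : Set R)).Finite)
    -- R₁ = R/(P:G) with its G-action
    {R₁ : Type*} [Ring R₁] (π₁ : R →+* R₁) (hπ₁ : Function.Surjective π₁)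
    (hker₁ : ∀ r : R, π₁ r = 0 ↔ ∀ g : G, g • r ∈ P)
    [MulSemiringAction G R₁] (hπ₁e : ∀ (g : G) (r : R), π₁ (g • r) = g • π₁ r)
    {Q₁ : Type*} [Ring Q₁] (ι₁ : R₁ →+* Q₁) (hQ₁ : IsMartindaleQuot ι₁)
    [MulSemiringAction G Q₁] (hι₁e : ∀ (g : G) (x : R₁), g • ι₁ x = ι₁ (g • x))
    -- R₂ = R/P with its G_P-action
    {R₂ : Type*} [Ring R₂] (π₂ : R →+* R₂) (hπ₂ : Function.Surjective π₂)
    (hker₂ : ∀ r : R, π₂ r = 0 ↔ r ∈ P)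
    [MulSemiringAction (idealStab G P) R₂]
    (hπ₂e : ∀ (h : idealStab G P) (r : R), π₂ ((h : G) • r) = h • π₂ r)
    {Q₂ : Type*} [Ring Q₂] (ι₂ : R₂ →+* Q₂) (hQ₂ : IsMartindaleQuot ι₂)
    [MulSemiringAction (idealStab G P) Q₂]
    (hι₂e : ∀ (h : idealStab G P) (x : R₂), h • ι₂ x = ι₂ (h • x)) :
    ∃ e : invCenter G Q₁ ≃+* invCenter (idealStab G P) Q₂,
      ∀ (c : invCenter G Q₁) (x y : R),
        (c : Q₁) * ι₁ (π₁ x) = ι₁ (π₁ y) →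
        (e c : Q₂) * ι₂ (π₂ x) = ι₂ (π₂ y) := by
  have S : PrimeOrbitSetup G P π₁ ι₁ π₂ ι₂ :=
    ⟨hP, hfin, hπ₁, hker₁, hπ₁e, hQ₁, hι₁e, hπ₂, hker₂, hπ₂e, hQ₂, hι₂e⟩
  exact exists_ringEquiv_of_rel S.existsUnique_graphRel_le S.exists_graphRel_le
    (fun {c c'} => S.graphRel_le_add c.2.1 c'.2.1) (fun {c c'} => S.graphRel_le_mul c.2.1 c'.2.1)
    fun c hc => Subtype.ext (S.eq_zero_of_graphRel_le_zero c.2.1 c.2.2 hc)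

/-- Let a group `G` act by `k`-algebra automorphisms on a `k`-algebra `R` and let `P`
be a prime ideal of `R` with finite `G`-orbit. Let `R₁ = R/(P:G)` and `R₂ = R/P` with
their induced actions of `G` and of the stabilizer `G_P`, and let `Q₁`, `Q₂` be
Amitsur–Martindale quotient rings of `R₁`, `R₂` with the (unique) extended actions.
Then the canonical surjection `R/(P:G) → R/P` induces an isomorphism of fields
`C(R/(P:G))^G ≅ C(R/P)^{G_P}`. -/
theorem invariant_centroid_iso_of_finite_orbit
    {k : Type*} [Field k] {G R : Type*} [Group G] [Ring R] [Algebra k R]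
    [MulSemiringAction G R] [SMulCommClass G k R]
    (P : TwoSidedIdeal R) (hP : IsPrimeTwoSided P)
    (hfin : (MulAction.orbit G (P : Set R)).Finite)
    -- R₁ = R/(P:G) with its G-action
    {R₁ : Type*} [Ring R₁] (π₁ : R →+* R₁) (hπ₁ : Function.Surjective π₁)
    (hker₁ : ∀ r : R, π₁ r = 0 ↔ ∀ g : G, g • r ∈ P)
    [MulSemiringAction G R₁] (hπ₁e : ∀ (g : G) (r : R), π₁ (g • r) = g • π₁ r)
    {Q₁ : Type*} [Ring Q₁] (ι₁ : R₁ →+* Q₁) (hQ₁ : IsMartindaleQuot ι₁)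
    [MulSemiringAction G Q₁] (hι₁e : ∀ (g : G) (x : R₁), g • ι₁ x = ι₁ (g • x))
    -- R₂ = R/P with its G_P-action
    {R₂ : Type*} [Ring R₂] (π₂ : R →+* R₂) (hπ₂ : Function.Surjective π₂)
    (hker₂ : ∀ r : R, π₂ r = 0 ↔ r ∈ P)
    [MulSemiringAction (idealStab G P) R₂]
    (hπ₂e : ∀ (h : idealStab G P) (r : R), π₂ ((h : G) • r) = h • π₂ r)
    {Q₂ : Type*} [Ring Q₂] (ι₂ : R₂ →+* Q₂) (hQ₂ : IsMartindaleQuot ι₂)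
    [MulSemiringAction (idealStab G P) Q₂]
    (hι₂e : ∀ (h : idealStab G P) (x : R₂), h • ι₂ x = ι₂ (h • x)) :
    ∃ e : invCenter G Q₁ ≃+* invCenter (idealStab G P) Q₂,
      ∀ (c : invCenter G Q₁) (x y : R),
        (c : Q₁) * ι₁ (π₁ x) = ι₁ (π₁ y) →
        (e c : Q₂) * ι₂ (π₂ x) = ι₂ (π₂ y) :=
  invariant_centroid_iso_of_finite_orbit_general P hP hfin π₁ hπ₁ hker₁ hπ₁e ι₁ hQ₁ hι₁e π₂ hπ₂
    hker₂ hπ₂e ι₂ hQ₂ hι₂e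
end

section
/- Let G be a connected affine algebraic group over an algebraically closed field k acting rationally by k-algebra automorphisms on a k-algebra R. Then for every prime ideal P of R, the ideal (P:G) = ⋂_{g∈G} g·P is a prime ideal of R. Consequently, the G-prime ideals of R are exactly the G-stable prime ideals. -/
/-!
A point of `G` is a `k`-point of `A = k[G]`, and by rationality the condition `g • x ∈ P` says
that finitely many coefficients of `ρ x ∈ R ⊗ A` (modulo `P`) vanish at `g`: it cuts out a
Zariski-closed subset of `G`. If `a R b ⊆ (P:G)` then `G` is covered by the closed sets attached
to `a` and `b`, and irreducibility of `G` (`A` is a domain; points are detected by the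
Nullstellensatz) forces one of them to be all of `G`, i.e. `a ∈ (P:G)` or `b ∈ (P:G)`.

Conversely, for a `G`-prime `I` take `P ⊇ I` maximal with `(P:G) ⊆ I` (Zorn: the orbit of any
element spans a finite-dimensional subspace, on which an ascending chain of ideals stabilises).
Such a `P` is prime, so `I = (P:G)` is prime by the first part.
-/

open TensorProduct

theorem Algebra.FiniteType.exists_algHom_apply_ne_zero (k : Type*) [Field k] [IsAlgClosed k]
    {A : Type*} [CommRing A] [IsReduced A] [Algebra k A] [Algebra.FiniteType k A]
    {a : A} (ha : a ≠ 0) : ∃ φ : A →ₐ[k] k, φ a ≠ 0 := by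
  have : IsJacobsonRing A := isJacobsonRing_of_finiteType (A := k)
  obtain ⟨m, hm, ham⟩ : ∃ m : Ideal A, m.IsMaximal ∧ a ∉ m := by
    by_contra! h
    have : a ∈ (⊥ : Ideal A).jacobson := Ideal.mem_sInf.mpr fun {J} hJ => h J hJ.2
    rw [← Ideal.radical_eq_jacobson, ← Ideal.zero_eq_bot, ← nilradical, nilradical_eq_zero]
      at this
    exact ha this
  let := Ideal.Quotient.field m
  have : Algebra.FiniteType k (A ⧸ m) := .of_surjective _ (Ideal.Quotient.mkₐ_surjective k m)
  have : Module.Finite k (A ⧸ m) := finite_of_finite_type_of_isJacobsonRing k (A ⧸ m)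
  refine ⟨IsAlgClosed.lift.comp (Ideal.Quotient.mkₐ k m), fun h => ham ?_⟩
  exact Ideal.Quotient.eq_zero_iff_mem.1
    ((map_eq_zero_iff _ (IsAlgClosed.lift : A ⧸ m →ₐ[k] k).toRingHom.injective).1 h)

namespace TensorProduct

section CommRing

variable {k : Type*} [CommRing k] {A : Type*} [AddCommGroup A] [Module k A]
  {M N : Type*} [AddCommGroup M] [Module k M] [AddCommGroup N] [Module k N]

/-- For a `k`-point `φ = ev_g` of `A = k[G]`, this evaluates an `M`-valued regular function on `G`
at `g`. -/
def evalAt (φ : A →ₗ[k] k) : M ⊗[k] A →ₗ[k] M :=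
  (TensorProduct.rid k M).toLinearMap ∘ₗ TensorProduct.map LinearMap.id φ

@[simp]
theorem evalAt_tmul (φ : A →ₗ[k] k) (m : M) (a : A) :
    evalAt φ (m ⊗ₜ[k] a) = φ a • m := by
  simp [evalAt]

theorem evalAt_rTensor (φ : A →ₗ[k] k) (f : M →ₗ[k] N) (t : M ⊗[k] A) :
    evalAt φ (f.rTensor A t) = f (evalAt φ t) := by
  induction t using TensorProduct.induction_on with
  | zero => simp
  | tmul m a => simp
  | add x y hx hy => simp [hx, hy]

theorem repr_evalAt {ι : Type*} [DecidableEq ι] (b : Module.Basis ι k M) (φ : A →ₗ[k] k)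
    (t : M ⊗[k] A) (i : ι) :
    b.repr (evalAt φ t) i = φ (equivFinsuppOfBasisLeft b t i) := by
  induction t using TensorProduct.induction_on with
  | zero => simp
  | tmul m a => simp [mul_comm]
  | add x y hx hy => simp [hx, hy]

theorem exists_fg_forall_evalAt_mem (t : M ⊗[k] A) :
    ∃ V : Submodule k M, V.FG ∧ ∀ φ : A →ₗ[k] k, evalAt φ t ∈ V := by
  obtain ⟨V, hV, ht⟩ := exists_finite_submodule_left_of_setFinite {t} (Set.finite_singleton t)
  obtain ⟨t', rfl⟩ := ht rfl
  exact ⟨V, Module.Finite.iff_fg.1 hV, fun φ => by simp [evalAt_rTensor]⟩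

end CommRing

section Field

variable {k : Type*} [Field k] {M N : Type*} [AddCommGroup M] [Module k M]
  [AddCommGroup N] [Module k N]

/-- The non-vanishing locus of `t` is open: it is covered by basic opens `D(c)`. -/
theorem exists_apply_ne_zero_of_evalAt_ne_zero {A : Type*} [AddCommGroup A] [Module k A]
    {φ : A →ₗ[k] k} {t : M ⊗[k] A} (h : evalAt φ t ≠ 0) :
    ∃ c : A, φ c ≠ 0 ∧ ∀ ψ : A →ₗ[k] k, evalAt ψ t = 0 → ψ c = 0 := by
  classical
  let b := Module.Free.chooseBasis k M
  obtain ⟨i, hi⟩ : ∃ i, b.repr (evalAt φ t) i ≠ 0 := by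
    by_contra! h'
    exact h (b.repr.injective (Finsupp.ext fun i => by simpa using h' i))
  refine ⟨equivFinsuppOfBasisLeft b t i, by rwa [← repr_evalAt], fun ψ hψ => ?_⟩
  rw [← repr_evalAt, hψ, map_zero, Finsupp.zero_apply]

theorem exists_apply_ne_zero_of_evalAt_notMem {A : Type*} [AddCommGroup A] [Module k A]
    {p : Submodule k M} {φ : A →ₗ[k] k} {t : M ⊗[k] A} (h : evalAt φ t ∉ p) :
    ∃ c : A, φ c ≠ 0 ∧ ∀ ψ : A →ₗ[k] k, evalAt ψ t ∈ p → ψ c = 0 := by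
  simp_rw [← Submodule.Quotient.mk_eq_zero, ← Submodule.mkQ_apply, ← evalAt_rTensor] at h ⊢
  exact exists_apply_ne_zero_of_evalAt_ne_zero h

theorem forall_evalAt_mem_or_forall_evalAt_mem [IsAlgClosed k] {A : Type*} [CommRing A]
    [IsDomain A] [Algebra k A] [Algebra.FiniteType k A] {p : Submodule k M} {q : Submodule k N}
    {s : M ⊗[k] A} {t : N ⊗[k] A}
    (h : ∀ φ : A →ₐ[k] k, evalAt φ.toLinearMap s ∈ p ∨ evalAt φ.toLinearMap t ∈ q) :
    (∀ φ : A →ₐ[k] k, evalAt φ.toLinearMap s ∈ p) ∨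
      ∀ φ : A →ₐ[k] k, evalAt φ.toLinearMap t ∈ q := by
  by_contra! ⟨⟨φ, hφ⟩, ⟨ψ, hψ⟩⟩
  obtain ⟨c, hφc, hc⟩ := exists_apply_ne_zero_of_evalAt_notMem hφ
  obtain ⟨d, hψd, hd⟩ := exists_apply_ne_zero_of_evalAt_notMem hψ
  have hcd : c * d ≠ 0 := mul_ne_zero (fun h => hφc (by simp [h])) (fun h => hψd (by simp [h]))
  obtain ⟨χ, hχ⟩ := Algebra.FiniteType.exists_algHom_apply_ne_zero k hcd
  rw [map_mul] at hχ
  rcases h χ with h | h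
  exacts [left_ne_zero_of_mul hχ (hc _ h), right_ne_zero_of_mul hχ (hd _ h)]

end Field

end TensorProduct

namespace TwoSidedIdeal

section Ring

variable {R : Type*} [Ring R]

theorem _root_.IsPrimeTwoSided.mem_or_mem_s13 {P : TwoSidedIdeal R} (hP : IsPrimeTwoSided P)
    {x y : R} (h : ∀ r, x * r * y ∈ P) : x ∈ P ∨ y ∈ P := by
  have hx : ∀ u ∈ span {x}, ∀ r, u * r * y ∈ P := fun u hu => by
    induction hu using span_induction with
    | mem u hu => rwa [Set.mem_singleton_iff.1 hu]
    | zero => simp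
    | add u v _ _ hu hv => exact fun r => by simpa [add_mul] using add_mem _ (hu r) (hv r)
    | neg u _ hu => exact fun r => by simpa using neg_mem _ (hu r)
    | left_absorb a u _ hu => exact fun r => by simpa [mul_assoc] using mul_mem_left _ a _ (hu r)
    | right_absorb b u _ hu => exact fun r => by simpa [mul_assoc] using hu (b * r)
  have hxy : ∀ v ∈ span {y}, ∀ u ∈ span {x}, ∀ r, u * r * v ∈ P := fun v hv => by
    induction hv using span_induction with
    | mem v hv => rw [Set.mem_singleton_iff.1 hv]; exact hx
    | zero => simp
    | add v w _ _ hv hw =>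
      exact fun u hu r => by simpa [mul_add] using add_mem _ (hv u hu r) (hw u hu r)
    | neg v _ hv => exact fun u hu r => by simpa using neg_mem _ (hv u hu r)
    | left_absorb a v _ hv => exact fun u hu r => by simpa [mul_assoc] using hv u hu (r * a)
    | right_absorb b v _ hv =>
      exact fun u hu r => by simpa [mul_assoc] using mul_mem_right _ _ b (hv u hu r)
  refine (hP.2 _ _ fun u hu v hv => by simpa using hxy v hv u hu 1).imp ?_ ?_ <;>
    exact fun h => h (subset_span rfl)

theorem mem_sSup_of_isChain {c : Set (TwoSidedIdeal R)} (hc : IsChain (· ≤ ·) c)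
    (hne : c.Nonempty) {x : R} : x ∈ sSup c ↔ ∃ J ∈ c, x ∈ J := by
  refine ⟨fun hx => ?_, fun ⟨J, hJ, hx⟩ => le_sSup hJ hx⟩
  let U : TwoSidedIdeal R := .mk' (⋃ J ∈ c, (J : Set R))
    (Set.mem_biUnion hne.some_mem (zero_mem _))
    (fun {x y} hx hy => by
      obtain ⟨I, hI, hx⟩ := Set.mem_iUnion₂.1 hx
      obtain ⟨J, hJ, hy⟩ := Set.mem_iUnion₂.1 hy
      rcases hc.total hI hJ with h | h
      · exact Set.mem_biUnion hJ (add_mem _ (h hx) hy)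
      · exact Set.mem_biUnion hI (add_mem _ hx (h hy)))
    (fun {x} hx => by
      obtain ⟨J, hJ, hx⟩ := Set.mem_iUnion₂.1 hx
      exact Set.mem_biUnion hJ (neg_mem _ hx))
    (fun {x y} hy => by
      obtain ⟨J, hJ, hy⟩ := Set.mem_iUnion₂.1 hy
      exact Set.mem_biUnion hJ (mul_mem_left _ _ _ hy))
    (fun {x y} hx => by
      obtain ⟨J, hJ, hx⟩ := Set.mem_iUnion₂.1 hx
      exact Set.mem_biUnion hJ (mul_mem_right _ _ _ hx))
  have hU : sSup c ≤ U := sSup_le fun J hJ y hy => (mem_mk' ..).2 (Set.mem_biUnion hJ hy)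
  simpa [U, mem_mk'] using hU hx

theorem exists_max_trace_of_isChain (k : Type*) [CommRing k] [Algebra k R]
    (V : Submodule k R) [IsNoetherian k V] {c : Set (TwoSidedIdeal R)}
    (hc : IsChain (· ≤ ·) c) (hne : c.Nonempty) :
    ∃ J₀ ∈ c, ∀ J ∈ c, ∀ y ∈ V, y ∈ J → y ∈ J₀ := by
  let trace (J : TwoSidedIdeal R) : Submodule k V :=
    (J.asIdeal.restrictScalars k).comap V.subtype
  obtain ⟨_, ⟨J₀, hJ₀, rfl⟩, hmax⟩ :=
    set_has_maximal_iff_noetherian.2 ‹_› (trace '' c) (hne.image trace)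
  refine ⟨J₀, hJ₀, fun J hJ y hyV hyJ => ?_⟩
  rcases hc.total hJ hJ₀ with h | h
  · exact h hyJ
  · have hle : trace J₀ ≤ trace J := fun z hz => by
      simpa [trace] using h (by simpa [trace] using hz)
    have : trace J ≤ trace J₀ := not_lt_iff_le_imp_ge.1 (hmax _ ⟨J, hJ, rfl⟩) hle
    simpa [trace] using this (show (⟨y, hyV⟩ : V) ∈ trace J by simpa [trace])

theorem mul_mem_of_mem_sup {P A B : TwoSidedIdeal R} (h : ∀ a ∈ A, ∀ b ∈ B, a * b ∈ P) :
    ∀ x ∈ P ⊔ A, ∀ y ∈ P ⊔ B, x * y ∈ P := by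
  rintro _ hx _ hy
  obtain ⟨p, hp, a, ha, rfl⟩ := mem_sup.1 hx
  obtain ⟨q, hq, b, hb, rfl⟩ := mem_sup.1 hy
  rw [mul_add, add_mul, add_mul]
  exact add_mem _ (add_mem _ (mul_mem_right _ _ _ hp) (mul_mem_left _ _ _ hq))
    (add_mem _ (mul_mem_right _ _ _ hp) (h a ha b hb))

end Ring

section Core

variable (G : Type*) {R : Type*} [Group G] [Ring R] [MulSemiringAction G R]

/-- The paper's `(P:G) = ⋂_{g ∈ G} g⁻¹ • P`. -/
def core (P : TwoSidedIdeal R) : TwoSidedIdeal R :=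
  ⨅ g : G, P.comap (MulSemiringAction.toRingHom G R g)

variable {G}

theorem mem_core {P : TwoSidedIdeal R} {x : R} : x ∈ core G P ↔ ∀ g : G, g • x ∈ P := by
  simp [core, mem_iInf, mem_comap]

theorem core_le (P : TwoSidedIdeal R) : core G P ≤ P :=
  fun x hx => by simpa using mem_core.1 hx 1

theorem core_top : core G (⊤ : TwoSidedIdeal R) = ⊤ :=
  eq_top_iff.2 fun _ _ => mem_core.2 fun _ => trivial

theorem isGStable_core (P : TwoSidedIdeal R) : IsGStable G (core G P) :=
  fun g _ hx => mem_core.2 fun h => by simpa [mul_smul] using mem_core.1 hx (h * g)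

theorem le_core_of_isGStable {I P : TwoSidedIdeal R} (hI : IsGStable G I) (hIP : I ≤ P) :
    I ≤ core G P :=
  fun x hx => mem_core.2 fun g => hIP (hI g x hx)

theorem mul_mem_core {X Y Z : TwoSidedIdeal R} (h : ∀ x ∈ X, ∀ y ∈ Y, x * y ∈ Z) :
    ∀ x ∈ core G X, ∀ y ∈ core G Y, x * y ∈ core G Z :=
  fun x hx y hy => mem_core.2 fun g => by
    rw [smul_mul']
    exact h _ (mem_core.1 hx g) _ (mem_core.1 hy g)

theorem _root_.IsPrimeTwoSided.isGPrime {P : TwoSidedIdeal R} (hP : IsPrimeTwoSided P)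
    (hs : IsGStable G P) : IsGPrime G P :=
  ⟨hP.1, hs, fun A B _ _ h => hP.2 A B h⟩

theorem isPrimeTwoSided_core {P : TwoSidedIdeal R} (hP : IsPrimeTwoSided P)
    (hirr : ∀ a b : R, (∀ g : G, g • a ∈ P ∨ g • b ∈ P) →
      (∀ g : G, g • a ∈ P) ∨ ∀ g : G, g • b ∈ P) :
    IsPrimeTwoSided (core G P) := by
  refine ⟨fun h => hP.1 (top_le_iff.1 (h ▸ core_le P)), fun A B hAB => ?_⟩
  by_contra! hAB'
  obtain ⟨a, ha, haP⟩ := SetLike.not_le_iff_exists.1 hAB'.1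
  obtain ⟨b, hb, hbP⟩ := SetLike.not_le_iff_exists.1 hAB'.2
  have hcover : ∀ g : G, g • a ∈ P ∨ g • b ∈ P := fun g => hP.mem_or_mem_s13 fun r => by
    simpa [smul_mul'] using mem_core.1 (hAB _ (mul_mem_right _ a (g⁻¹ • r) ha) b hb) g
  rcases hirr a b hcover with h | h
  exacts [haP (mem_core.2 h), hbP (mem_core.2 h)]

theorem exists_maximal_core_le (k : Type*) [CommRing k] [IsNoetherianRing k] [Algebra k R]
    (hfin : ∀ x : R, ∃ V : Submodule k R, V.FG ∧ ∀ g : G, g • x ∈ V)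
    (I : TwoSidedIdeal R) :
    ∃ P, I ≤ P ∧ Maximal (fun J => core G J ≤ I) P := by
  refine zorn_le_nonempty₀ {J | core G J ≤ I}
    (fun c hcI hc J hJ => ⟨sSup c, fun x hx => ?_, fun _ => le_sSup⟩) I (core_le I)
  obtain ⟨V, hV, horb⟩ := hfin x
  have := isNoetherian_of_fg_of_noetherian V hV
  obtain ⟨J₀, hJ₀, hmax⟩ := exists_max_trace_of_isChain k V hc ⟨J, hJ⟩
  refine hcI hJ₀ (mem_core.2 fun g => ?_)
  obtain ⟨J', hJ', hgx⟩ := (mem_sSup_of_isChain hc ⟨J, hJ⟩).1 (mem_core.1 hx g)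
  exact hmax J' hJ' _ (horb g) hgx

theorem isPrimeTwoSided_of_maximal_core_le {I P : TwoSidedIdeal R} (hI : IsGPrime G I)
    (hP : Maximal (fun J => core G J ≤ I) P) : IsPrimeTwoSided P := by
  have hcore : ∀ C, ¬C ≤ P → ¬core G (P ⊔ C) ≤ I :=
    fun C hC h => hC (le_sup_right.trans (hP.2 h le_sup_left))
  refine ⟨fun hP_top => hI.1 (top_le_iff.1 (core_top (G := G) (R := R) ▸ hP_top ▸ hP.1)),
    fun A B hAB => ?_⟩
  by_contra! hAB'
  rcases hI.2.2 _ _ (isGStable_core _) (isGStable_core _)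
    (fun x hx y hy => hP.1 (mul_mem_core (mul_mem_of_mem_sup hAB) x hx y hy)) with h | h
  exacts [hcore A hAB'.1 h, hcore B hAB'.2 h]

end Core

end TwoSidedIdeal

section RationalAction

variable {k : Type*} [Field k] {A : Type*} [CommRing A] [Algebra k A] {G : Type*}
  {R : Type*} [AddCommGroup R] [Module k R] [SMul G R] {pt : G → A →ₐ[k] k}
  {ρ : R →ₗ[k] R ⊗[k] A}

theorem exists_fg_forall_smul_mem_of_rational
    (haction : ∀ g r, g • r = evalAt (pt g).toLinearMap (ρ r)) (x : R) :
    ∃ V : Submodule k R, V.FG ∧ ∀ g : G, g • x ∈ V := by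
  obtain ⟨V, hV, h⟩ := exists_fg_forall_evalAt_mem (ρ x)
  exact ⟨V, hV, fun g => haction g x ▸ h _⟩

theorem forall_smul_mem_or_forall_smul_mem_of_rational [IsAlgClosed k] [IsDomain A]
    [Algebra.FiniteType k A] (hpt : Function.Surjective pt)
    (haction : ∀ g r, g • r = evalAt (pt g).toLinearMap (ρ r)) (p : Submodule k R) {a b : R}
    (h : ∀ g : G, g • a ∈ p ∨ g • b ∈ p) :
    (∀ g : G, g • a ∈ p) ∨ ∀ g : G, g • b ∈ p := by
  simp only [haction] at h ⊢
  exact (forall_evalAt_mem_or_forall_evalAt_mem (hpt.forall.2 h)).imp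
    (fun h' g => h' (pt g)) (fun h' g => h' (pt g))

end RationalAction

theorem core_is_prime_of_connected_general
    {k : Type*} [Field k] [IsAlgClosed k]
    {A : Type*} [CommRing A] [IsDomain A] [HopfAlgebra k A] [Algebra.FiniteType k A]
    {G : Type*} [Group G] (pt : G ≃ (A →ₐ[k] k))
    {R : Type*} [Ring R] [Algebra k R] [MulSemiringAction G R]
    (ρ : R →ₐ[k] R ⊗[k] A)
    (haction : ∀ (g : G) (r : R), g • r =
      (TensorProduct.rid k R)
        (TensorProduct.map LinearMap.id (pt g).toLinearMap (ρ r))) :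
    (∀ P Q : TwoSidedIdeal R, IsPrimeTwoSided P →
        (∀ x : R, x ∈ Q ↔ ∀ g : G, g • x ∈ P) → IsPrimeTwoSided Q) ∧
      ∀ I : TwoSidedIdeal R, IsGPrime G I ↔ (IsPrimeTwoSided I ∧ IsGStable G I) := by
  have hcore_prime (P : TwoSidedIdeal R) (hP : IsPrimeTwoSided P) :
      IsPrimeTwoSided (P.core G) :=
    TwoSidedIdeal.isPrimeTwoSided_core hP fun a b h => by
      simpa using forall_smul_mem_or_forall_smul_mem_of_rational (ρ := ρ.toLinearMap)
        pt.surjective haction (P.asIdeal.restrictScalars k) (by simpa using h)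
  refine ⟨fun P Q hP hQ => ?_,
    fun I => ⟨fun hI => ⟨?_, hI.2.1⟩, fun h => h.1.isGPrime h.2⟩⟩
  · convert hcore_prime P hP
    ext x
    exact (hQ x).trans TwoSidedIdeal.mem_core.symm
  · obtain ⟨P, hIP, hP⟩ := TwoSidedIdeal.exists_maximal_core_le k
      (exists_fg_forall_smul_mem_of_rational (ρ := ρ.toLinearMap) haction) I
    rw [← le_antisymm hP.1 (TwoSidedIdeal.le_core_of_isGStable hI.2.1 hIP)]
    exact hcore_prime P (TwoSidedIdeal.isPrimeTwoSided_of_maximal_core_le hI hP)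

/-- Let `G` be a connected affine algebraic group over an algebraically closed field
`k`, presented by its coordinate Hopf algebra `A = k[G]` (a finitely generated domain)
together with the identification `pt` of `G` with the group of `k`-points of `A`.
Let `G` act rationally on a `k`-algebra `R`, i.e. via a comodule-algebra structure
`ρ : R → R ⊗ A` with `g • r = (id ⊗ ev_g)(ρ r)`. Then for every prime ideal `P` of
`R` the core `(P:G) = ⋂_{g∈G} g•P` is prime; consequently the `G`-prime ideals of `R`
are exactly the `G`-stable prime ideals. -/
theorem core_is_prime_of_connected
    {k : Type*} [Field k] [IsAlgClosed k]
    {A : Type*} [CommRing A] [IsDomain A] [HopfAlgebra k A] [Algebra.FiniteType k A]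
    {G : Type*} [Group G] (pt : G ≃ (A →ₐ[k] k))
    (hpt : ∀ (g h : G) (a : A), pt (g * h) a =
      LinearMap.mul' k k
        (TensorProduct.map (pt g).toLinearMap (pt h).toLinearMap (Coalgebra.comul a)))
    {R : Type*} [Ring R] [Algebra k R] [MulSemiringAction G R]
    (ρ : R →ₐ[k] R ⊗[k] A)
    (hcounit : ∀ r : R, (TensorProduct.rid k R)
      (TensorProduct.map LinearMap.id (Bialgebra.counitAlgHom k A).toLinearMap (ρ r))
        = r)
    (haction : ∀ (g : G) (r : R), g • r =
      (TensorProduct.rid k R)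
        (TensorProduct.map LinearMap.id (pt g).toLinearMap (ρ r))) :
    (∀ P Q : TwoSidedIdeal R, IsPrimeTwoSided P →
        (∀ x : R, x ∈ Q ↔ ∀ g : G, g • x ∈ P) → IsPrimeTwoSided Q) ∧
      ∀ I : TwoSidedIdeal R, IsGPrime G I ↔ (IsPrimeTwoSided I ∧ IsGStable G I) :=
  core_is_prime_of_connected_general pt ρ haction
end
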